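/- Let G be the connected strongly interval graph on the vertex set {J_0,…,J_k} ∪ {I_1,…,I_r}, where k ≥ 1, J_0 = [0,0], J_i = [i−1,i] for i = 1,…,k, and I_j = [a_j,b_j] ⊆ [0,k]\{k} with a_j a nonnegative integer for j = 1,…,r. Then J_0, J_1, …, J_k is an induced path of length k in G, and the length of a longest induced path in G equals k; in particular L(G) = k = c(G). -/

import Mathlib

/-- `c(G)`: the number of maximal cliques of a graph `G`. -/
noncomputable def numMaximalCliques {V : Type*} (G : SimpleGraph V) : ℕ :=
  {s : Set V | Maximal (fun t => G.IsClique t) s}.ncard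

/-- `f 0, f 1, …, f m` is an induced path in `G`: the vertices are pairwise distinct and two
of them are adjacent if and only if they are consecutive. -/
def IsInducedPath {V : Type*} (G : SimpleGraph V) (m : ℕ) (f : ℕ → V) : Prop :=
  (∀ i ≤ m, ∀ j ≤ m, f i = f j → i = j) ∧
  (∀ i ≤ m, ∀ j ≤ m, (G.Adj (f i) (f j) ↔ (j = i + 1 ∨ i = j + 1)))

/-- The length of a longest induced path in `G`. -/
noncomputable def longestInducedPath {V : Type*} (G : SimpleGraph V) : ℕ :=
  sSup {m | ∃ f : ℕ → V, IsInducedPath G m f}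

/-- `L(G)`: the sum, over the connected components of `G`, of the lengths of longest induced
paths of the components. -/
noncomputable def inducedPathSum {V : Type*} (G : SimpleGraph V) : ℕ :=
  ∑ᶠ c : G.ConnectedComponent, longestInducedPath (G.induce c.supp)

/-- The interval graph on a set `I` of closed real intervals, encoded as pairs
`(left endpoint, right endpoint)`: two distinct intervals are adjacent iff they intersect. -/
def intervalGraph (I : Set (ℝ × ℝ)) : SimpleGraph I where
  Adj p q := p ≠ q ∧ (Set.Icc p.val.1 p.val.2 ∩ Set.Icc q.val.1 q.val.2).Nonempty
  symm := ⟨by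
    rintro p q ⟨h1, h2⟩
    exact ⟨h1.symm, by rwa [Set.inter_comm]⟩⟩
  loopless := ⟨fun p h => h.1 rfl⟩

/-- The interval `J_i`: `J_0 = [0,0]` and `J_i = [i-1,i]` for `i ≥ 1`. -/
noncomputable def Jint (i : ℕ) : ℝ × ℝ := if i = 0 then (0, 0) else ((i : ℝ) - 1, (i : ℝ))

/-- The vertex set `{J_0,…,J_k} ∪ {I_1,…,I_r}` of a connected strongly interval graph, where
`I_j = [a j, b j]`. -/
def stronglyIntervalVerts (k r : ℕ) (a : Fin r → ℕ) (b : Fin r → ℝ) : Set (ℝ × ℝ) :=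
  (Jint '' {i | i ≤ k}) ∪ (Set.range fun j : Fin r => ((a j : ℝ), b j))

/-- The conditions on the data of a connected strongly interval graph: `k ≥ 1` and each
`I_j = [a j, b j]` is a genuine closed interval, with integer left endpoint `a j`, contained
in `[0,k] \ {k}`. -/
def StronglyIntervalData (k r : ℕ) (a : Fin r → ℕ) (b : Fin r → ℝ) : Prop :=
  1 ≤ k ∧ ∀ j : Fin r, (a j : ℝ) ≤ b j ∧
    Set.Icc (a j : ℝ) (b j) ⊆ Set.Icc (0 : ℝ) (k : ℝ) \ {(k : ℝ)}

/-- A graph is a strongly interval graph if every connected component of it is isomorphic to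
a connected strongly interval graph. -/
def IsStronglyIntervalGraph {V : Type*} (G : SimpleGraph V) : Prop :=
  ∀ c : G.ConnectedComponent, ∃ (k r : ℕ) (a : Fin r → ℕ) (b : Fin r → ℝ),
    StronglyIntervalData k r a b ∧
    Nonempty ((G.induce c.supp) ≃g intervalGraph (stronglyIntervalVerts k r a b))

/-!
Every vertex `[p, q]` has an integer left endpoint `p < k`, and `p ∈ [p, q]`. By the Helly
property of intervals, a maximal clique is the set of intervals through the largest left endpoint
of its members; conversely, the intervals through `t < k` form a maximal clique, since anything
meeting both `J_t = [t-1, t]` and `J_{t+1} = [t, t+1]` contains `t`. Hence `c(G) = k`.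
In an induced path, the larger left endpoint of the two ends of an edge lies in both of them and in
no other vertex of the path, so distinct edges give distinct integers in `[0, k)`: every induced
path has length at most `k`, which `J_0, …, J_k` attains. Each vertex meets some `J_{t+1}`, so `G`
is connected and `L(G)` is the length of a longest induced path.
-/

section InducedPath

variable {V W : Type*} {G : SimpleGraph V} {H : SimpleGraph W}

theorem IsInducedPath.map (e : G ↪g H) {m : ℕ} {f : ℕ → V} (hf : IsInducedPath G m f) :
    IsInducedPath H m (e ∘ f) :=
  ⟨fun i hi j hj hij => hf.1 i hi j hj (e.injective hij),
    fun i hi j hj => e.map_adj_iff.trans (hf.2 i hi j hj)⟩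

theorem IsInducedPath.reachable {m : ℕ} {f : ℕ → V} (hf : IsInducedPath G m f) :
    ∀ i ≤ m, G.Reachable (f 0) (f i)
  | 0, _ => .rfl
  | i + 1, hi => (hf.reachable i (by omega)).trans
      ((hf.2 i (by omega) (i + 1) hi).2 (.inl rfl)).reachable

theorem longestInducedPath_congr (e : G ≃g H) : longestInducedPath G = longestInducedPath H := by
  unfold longestInducedPath
  congr 1
  ext m
  exact ⟨fun ⟨f, hf⟩ => ⟨_, hf.map e.toEmbedding⟩, fun ⟨f, hf⟩ => ⟨_, hf.map e.symm.toEmbedding⟩⟩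

theorem longestInducedPath_eq {k : ℕ} {g : ℕ → V} (hg : IsInducedPath G k g)
    (hle : ∀ m f, IsInducedPath G m f → m ≤ k) : longestInducedPath G = k :=
  IsGreatest.csSup_eq ⟨⟨g, hg⟩, fun m ⟨f, hf⟩ => hle m f hf⟩

theorem inducedPathSum_eq_of_connected (hG : G.Connected) :
    inducedPathSum G = longestInducedPath G := by
  have : Subsingleton G.ConnectedComponent := hG.preconnected.subsingleton_connectedComponent
  obtain ⟨v⟩ := hG.nonempty
  have hsupp : (G.connectedComponentMk v).supp = Set.univ :=
    Set.eq_univ_of_forall fun w => Subsingleton.elim _ _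
  unfold inducedPathSum
  rw [finsum_eq_single _ (G.connectedComponentMk v) fun c hc => (hc (Subsingleton.elim _ _)).elim,
    hsupp, longestInducedPath_congr G.induceUnivIso]

theorem SimpleGraph.nonempty_of_maximal_isClique [Nonempty V] {s : Set V}
    (hs : Maximal G.IsClique s) : s.Nonempty := by
  obtain ⟨v⟩ := ‹Nonempty V›
  by_contra hne
  rw [Set.not_nonempty_iff_eq_empty] at hne
  subst hne
  exact hs.2 (G.isClique_singleton v) (Set.empty_subset _) rfl

end InducedPath

section IntervalGraph

variable {I : Set (ℝ × ℝ)}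

variable (I) in
def intervalsContaining (x : ℝ) : Set I := {p | x ∈ Set.Icc p.1.1 p.1.2}

theorem intervalGraph_adj_iff {p q : I} :
    (intervalGraph I).Adj p q ↔ p ≠ q ∧ p.1.1 ⊔ q.1.1 ≤ p.1.2 ⊓ q.1.2 := by
  simp only [intervalGraph, Set.Icc_inter_Icc, Set.nonempty_Icc]

theorem intervalGraph_adj_of_mem {p q : I} {x : ℝ} (hpq : p ≠ q)
    (hp : p ∈ intervalsContaining I x) (hq : q ∈ intervalsContaining I x) :
    (intervalGraph I).Adj p q :=
  intervalGraph_adj_iff.2 ⟨hpq, (sup_le hp.1 hq.1).trans (le_inf hp.2 hq.2)⟩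

theorem isClique_intervalsContaining (x : ℝ) :
    (intervalGraph I).IsClique (intervalsContaining I x) :=
  fun _ hp _ hq hpq => intervalGraph_adj_of_mem hpq hp hq

theorem IsInducedPath.le_card_of_fst_mem {m : ℕ} {f : ℕ → I}
    (hf : IsInducedPath (intervalGraph I) m f) {S : Finset ℝ} (hS : ∀ p ∈ I, p.1 ∈ S) :
    m ≤ S.card := by
  set e : ℕ → ℝ := fun i => (f i).1.1 ⊔ (f (i + 1)).1.1
  have he : ∀ i < m,
      f i ∈ intervalsContaining I (e i) ∧ f (i + 1) ∈ intervalsContaining I (e i) := by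
    intro i hi
    have := (intervalGraph_adj_iff.1 ((hf.2 i (by omega) (i + 1) (by omega)).2 (.inl rfl))).2
    exact ⟨⟨le_sup_left, this.trans inf_le_left⟩, ⟨le_sup_right, this.trans inf_le_right⟩⟩
  have he_lt : ∀ i < m, ∀ j < m, i < j → e i ≠ e j := by
    intro i hi j hj hij heq
    have hne : f i ≠ f (j + 1) := fun h => by have := hf.1 i (by omega) (j + 1) (by omega) h; omega
    have := (hf.2 i (by omega) (j + 1) (by omega)).1
      (intervalGraph_adj_of_mem hne (he i hi).1 (heq ▸ (he j hj).2))
    omega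
  have heS : ∀ i, e i ∈ S := fun i => by
    obtain h | h := max_choice (f i).1.1 (f (i + 1)).1.1 <;> simp only [e, h] <;>
      exact hS _ (Subtype.prop _)
  calc m = (Finset.range m).card := (Finset.card_range m).symm
    _ ≤ S.card := Finset.card_le_card_of_injOn e (fun i _ => heS i) fun i hi j hj heq => by
        simp only [Finset.coe_range, Set.mem_Iio] at hi hj
        by_contra hne
        obtain h | h := Nat.lt_or_gt_of_ne hne
        · exact he_lt i hi j hj h heq
        · exact he_lt j hj i hi h heq.symm

theorem subset_intervalsContaining_of_isClique (hI : ∀ p ∈ I, p.1 ≤ p.2) {s : Set I}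
    (hs : (intervalGraph I).IsClique s) {w : I} (hw : w ∈ s) (hmax : ∀ v ∈ s, v.1.1 ≤ w.1.1) :
    s ⊆ intervalsContaining I w.1.1 := by
  intro v hv
  refine ⟨hmax v hv, ?_⟩
  obtain rfl | hvw := eq_or_ne v w
  · exact hI _ v.2
  · exact le_sup_right.trans ((intervalGraph_adj_iff.1 (hs hv hw hvw)).2.trans inf_le_left)

theorem exists_eq_intervalsContaining_of_maximal [Finite I] [Nonempty I]
    (hI : ∀ p ∈ I, p.1 ≤ p.2) {s : Set I} (hs : Maximal (intervalGraph I).IsClique s) :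
    ∃ w ∈ s, s = intervalsContaining I w.1.1 := by
  obtain ⟨w, hw, hmax⟩ :=
    s.exists_max_image (fun v => v.1.1) s.toFinite (SimpleGraph.nonempty_of_maximal_isClique hs)
  exact ⟨w, hw, hs.eq_of_subset (isClique_intervalsContaining _)
    (subset_intervalsContaining_of_isClique hI hs.1 hw hmax)⟩

theorem maximal_isClique_intervalsContaining {p q : I} {x : ℝ}
    (hp : p ∈ intervalsContaining I x) (hq : q ∈ intervalsContaining I x)
    (hpx : p.1.2 = x) (hqx : q.1.1 = x) :
    Maximal (intervalGraph I).IsClique (intervalsContaining I x) := by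
  refine ⟨isClique_intervalsContaining x, fun s hs hsub v hv => ?_⟩
  obtain rfl | hvp := eq_or_ne v p
  · exact hp
  obtain rfl | hvq := eq_or_ne v q
  · exact hq
  have hvp := (intervalGraph_adj_iff.1 (hs hv (hsub hp) hvp)).2
  have hvq := (intervalGraph_adj_iff.1 (hs hv (hsub hq) hvq)).2
  exact ⟨hpx ▸ le_sup_left.trans (hvp.trans inf_le_right),
    hqx ▸ le_sup_right.trans (hvq.trans inf_le_left)⟩

end IntervalGraph

section StronglyInterval

variable {k r : ℕ} {a : Fin r → ℕ} {b : Fin r → ℝ}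

/-- Truncated subtraction makes this formula cover `J_0 = [0,0]` too. -/
theorem Jint_eq (i : ℕ) : Jint i = (((i - 1 : ℕ) : ℝ), (i : ℝ)) := by
  unfold Jint
  split_ifs with hi
  · simp [hi]
  · simp [Nat.cast_sub (Nat.one_le_iff_ne_zero.2 hi)]

instance (k r : ℕ) (a : Fin r → ℕ) (b : Fin r → ℝ) : Finite (stronglyIntervalVerts k r a b) :=
  (((Set.finite_le_nat k).image Jint).union (Set.finite_range _)).to_subtype

variable (k r a b) in
/-- The path `J_0, …, J_k`, extended constantly beyond `k`. -/
noncomputable def jPath (i : ℕ) : stronglyIntervalVerts k r a b :=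
  ⟨Jint (min i k), Or.inl ⟨_, min_le_right i k, rfl⟩⟩

theorem jPath_val {i : ℕ} (hi : i ≤ k) : (jPath k r a b i).1 = Jint i := by
  simp [jPath, min_eq_left hi]

theorem jPath_mem_intervalsContaining_iff {i : ℕ} (hi : i ≤ k) {x : ℝ} :
    jPath k r a b i ∈ intervalsContaining _ x ↔ ((i - 1 : ℕ) : ℝ) ≤ x ∧ x ≤ i := by
  simp only [intervalsContaining, Set.mem_ofPred_eq, jPath_val hi, Jint_eq, Set.mem_Icc]

theorem isInducedPath_jPath :
    IsInducedPath (intervalGraph (stronglyIntervalVerts k r a b)) k (jPath k r a b) := by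
  refine ⟨fun i hi j hj hij => ?_, fun i hi j hj => ?_⟩
  · have := congrArg (fun p : stronglyIntervalVerts k r a b => p.1.2) hij
    simp only [jPath_val hi, jPath_val hj, Jint_eq] at this
    exact_mod_cast this
  · rw [intervalGraph_adj_iff, Ne, Subtype.ext_iff, jPath_val hi, jPath_val hj, Jint_eq, Jint_eq,
      Prod.ext_iff]
    simp only
    norm_cast
    omega

theorem fst_le_snd_of_mem_stronglyIntervalVerts (h : StronglyIntervalData k r a b) {p : ℝ × ℝ}
    (hp : p ∈ stronglyIntervalVerts k r a b) : p.1 ≤ p.2 := by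
  rcases hp with ⟨i, -, rfl⟩ | ⟨j, rfl⟩
  · rw [Jint_eq]
    exact Nat.cast_le.2 (Nat.sub_le i 1)
  · exact (h.2 j).1

theorem exists_natCast_eq_fst_of_mem_stronglyIntervalVerts (h : StronglyIntervalData k r a b)
    {p : ℝ × ℝ} (hp : p ∈ stronglyIntervalVerts k r a b) : ∃ t < k, (t : ℝ) = p.1 := by
  rcases hp with ⟨i, hi, rfl⟩ | ⟨j, rfl⟩
  · exact ⟨i - 1, by have := h.1; simp only [Set.mem_ofPred_eq] at hi; omega, by rw [Jint_eq]⟩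
  · have hb := (h.2 j).2 (Set.right_mem_Icc.2 (h.2 j).1)
    have hak : (a j : ℝ) < k := (h.2 j).1.trans_lt (lt_of_le_of_ne hb.1.2 hb.2)
    exact ⟨a j, by exact_mod_cast hak, rfl⟩

theorem jPath_succ_mem_intervalsContaining {t : ℕ} (ht : t < k) :
    jPath k r a b (t + 1) ∈ intervalsContaining _ (t : ℝ) :=
  (jPath_mem_intervalsContaining_iff ht).2 ⟨by simp, by simp⟩

theorem IsInducedPath.le_of_stronglyInterval (h : StronglyIntervalData k r a b) {m : ℕ}
    {f : ℕ → stronglyIntervalVerts k r a b}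
    (hf : IsInducedPath (intervalGraph (stronglyIntervalVerts k r a b)) m f) : m ≤ k := by
  calc m ≤ ((Finset.range k).image (Nat.cast : ℕ → ℝ)).card :=
        hf.le_card_of_fst_mem fun p hp => by
          obtain ⟨t, ht, htp⟩ := exists_natCast_eq_fst_of_mem_stronglyIntervalVerts h hp
          exact Finset.mem_image.2 ⟨t, Finset.mem_range.2 ht, htp⟩
    _ ≤ k := Finset.card_image_le.trans (Finset.card_range k).le

theorem connected_intervalGraph_stronglyIntervalVerts (h : StronglyIntervalData k r a b) :
    (intervalGraph (stronglyIntervalVerts k r a b)).Connected := by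
  have hreach : ∀ v, (intervalGraph _).Reachable (jPath k r a b 0) v := by
    intro v
    obtain ⟨t, htk, ht⟩ := exists_natCast_eq_fst_of_mem_stronglyIntervalVerts h v.2
    have hv : v ∈ intervalsContaining _ (t : ℝ) :=
      ⟨ht.ge, ht ▸ fst_le_snd_of_mem_stronglyIntervalVerts h v.2⟩
    refine (isInducedPath_jPath.reachable (t + 1) htk).trans ?_
    obtain heq | hne := eq_or_ne (jPath k r a b (t + 1)) v
    · exact heq ▸ .rfl
    · exact (intervalGraph_adj_of_mem hne (jPath_succ_mem_intervalsContaining htk) hv).reachable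
  have : Nonempty (stronglyIntervalVerts k r a b) := ⟨jPath k r a b 0⟩
  exact .mk fun u v => (hreach u).symm.trans (hreach v)

theorem maximal_isClique_iff_eq_intervalsContaining (h : StronglyIntervalData k r a b)
    {s : Set (stronglyIntervalVerts k r a b)} :
    Maximal (intervalGraph _).IsClique s ↔ ∃ t < k, intervalsContaining _ (t : ℝ) = s := by
  constructor
  · intro hs
    have : Nonempty (stronglyIntervalVerts k r a b) := ⟨jPath k r a b 0⟩
    obtain ⟨w, -, rfl⟩ := exists_eq_intervalsContaining_of_maximal
      (fun p hp => fst_le_snd_of_mem_stronglyIntervalVerts h hp) hs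
    obtain ⟨t, htk, ht⟩ := exists_natCast_eq_fst_of_mem_stronglyIntervalVerts h w.2
    exact ⟨t, htk, by rw [ht]⟩
  · rintro ⟨t, htk, rfl⟩
    refine maximal_isClique_intervalsContaining (p := jPath k r a b t)
      ((jPath_mem_intervalsContaining_iff htk.le).2 ⟨by simp, le_rfl⟩)
      (jPath_succ_mem_intervalsContaining htk) ?_ ?_
    · rw [jPath_val htk.le, Jint_eq]
    · rw [jPath_val htk, Jint_eq]
      simp

theorem injOn_intervalsContaining_natCast :
    Set.InjOn (fun t : ℕ => intervalsContaining (stronglyIntervalVerts k r a b) t) (Set.Iio k) := by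
  intro t (ht : t < k) t' (ht' : t' < k) (heq : intervalsContaining _ _ = intervalsContaining _ _)
  have h₁ := (jPath_mem_intervalsContaining_iff ht).1 (heq ▸ jPath_succ_mem_intervalsContaining ht)
  have h₂ := (jPath_mem_intervalsContaining_iff ht').1
    (heq.symm ▸ jPath_succ_mem_intervalsContaining ht')
  norm_cast at h₁ h₂
  omega

theorem numMaximalCliques_intervalGraph_stronglyIntervalVerts (h : StronglyIntervalData k r a b) :
    numMaximalCliques (intervalGraph (stronglyIntervalVerts k r a b)) = k := by
  have hcliques : {s | Maximal (intervalGraph (stronglyIntervalVerts k r a b)).IsClique s} =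
      (fun t : ℕ => intervalsContaining _ (t : ℝ)) '' Set.Iio k := by
    ext s
    simp [maximal_isClique_iff_eq_intervalsContaining h]
  rw [numMaximalCliques, hcliques, injOn_intervalsContaining_natCast.ncard_image,
    ← Finset.coe_range, Set.ncard_coe_finset, Finset.card_range]

end StronglyInterval

/-- Let `G` be the connected strongly interval graph on the vertex set
`{J_0,…,J_k} ∪ {I_1,…,I_r}`.  Then `J_0, J_1, …, J_k` is an induced path of length `k` in
`G`, the length of a longest induced path in `G` equals `k`, and `L(G) = k = c(G)`. -/
theorem inducedPath_of_stronglyInterval (k r : ℕ) (a : Fin r → ℕ) (b : Fin r → ℝ)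
    (h : StronglyIntervalData k r a b) :
    (∃ g : ℕ → (stronglyIntervalVerts k r a b),
      (∀ i ≤ k, (g i).val = Jint i) ∧
      IsInducedPath (intervalGraph (stronglyIntervalVerts k r a b)) k g) ∧
    longestInducedPath (intervalGraph (stronglyIntervalVerts k r a b)) = k ∧
    inducedPathSum (intervalGraph (stronglyIntervalVerts k r a b)) = k ∧
    numMaximalCliques (intervalGraph (stronglyIntervalVerts k r a b)) = k := by
  have hlong := longestInducedPath_eq isInducedPath_jPath fun _ _ hf =>
    hf.le_of_stronglyInterval h
  refine ⟨⟨jPath k r a b, fun i hi => jPath_val hi, isInducedPath_jPath⟩, hlong, ?_,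
    numMaximalCliques_intervalGraph_stronglyIntervalVerts h⟩
  rw [inducedPathSum_eq_of_connected (connected_intervalGraph_stronglyIntervalVerts h), hlong]
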